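/- If each f_m is convex and L-smooth, γ ≤ 1/(4L), and x̂_{t+1} = x̂_t − γ g_t, then ‖x̂_{t+1} − x_*‖² ≤ ‖x̂_t − x_*‖² + (3/2)γL V_t − γ(f(x̂_t) − f(x_*)). -/
import Mathlib

open Finset RealInnerProductSpace

/-- Average of vectors. -/
noncomputable def avgV {d M : ℕ} (x : Fin M → EuclideanSpace ℝ (Fin d)) :
    EuclideanSpace ℝ (Fin d) := (1 / (M : ℝ)) • ∑ m, x m

/-- Average of reals. -/
noncomputable def avgR {M : ℕ} (a : Fin M → ℝ) : ℝ := (1 / (M : ℝ)) * ∑ m, a m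

lemma avgR_le_avgR {M : ℕ} {a b : Fin M → ℝ} (h : ∀ m, a m ≤ b m) :
    avgR a ≤ avgR b := by
  unfold avgR
  have : (0:ℝ) ≤ 1 / (M:ℝ) := by positivity
  exact mul_le_mul_of_nonneg_left (Finset.sum_le_sum fun m _ => h m) this

lemma avgR_nonneg {M : ℕ} {a : Fin M → ℝ} (h : ∀ m, 0 ≤ a m) : 0 ≤ avgR a := by
  unfold avgR
  have : (0:ℝ) ≤ ∑ m, a m := Finset.sum_nonneg fun m _ => h m
  positivity

lemma avgR_const {M : ℕ} (hM : 0 < M) (r : ℝ) : avgR (fun _ : Fin M => r) = r := by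
  unfold avgR
  rw [Finset.sum_const, Finset.card_univ, Fintype.card_fin, nsmul_eq_mul]
  field_simp

lemma avgR_smul {M : ℕ} (r : ℝ) (a : Fin M → ℝ) :
    avgR (fun m => r * a m) = r * avgR a := by
  unfold avgR
  rw [← Finset.mul_sum]; ring

lemma avgR_sub {M : ℕ} (a b : Fin M → ℝ) :
    avgR (fun m => a m - b m) = avgR a - avgR b := by
  unfold avgR
  rw [Finset.sum_sub_distrib]; ring

lemma inner_avgV {d M : ℕ} (v : Fin M → EuclideanSpace ℝ (Fin d))
    (w : EuclideanSpace ℝ (Fin d)) :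
    ⟪avgV v, w⟫ = avgR (fun m => ⟪v m, w⟫) := by
  unfold avgV avgR
  rw [real_inner_smul_left, sum_inner]

lemma avgV_sub {d M : ℕ} (v w : Fin M → EuclideanSpace ℝ (Fin d)) :
    avgV v - avgV w = avgV (fun m => v m - w m) := by
  unfold avgV
  rw [← smul_sub, Finset.sum_sub_distrib]

/-- Jensen: squared norm of average is at most average of squared norms. -/
lemma norm_avgV_sq_le {d M : ℕ} (v : Fin M → EuclideanSpace ℝ (Fin d)) :
    ‖avgV v‖ ^ 2 ≤ avgR (fun m => ‖v m‖ ^ 2) := by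
  unfold avgV avgR
  have h1 : ‖(1 / (M:ℝ)) • ∑ m, v m‖ ≤ (1 / (M:ℝ)) * ∑ m, ‖v m‖ := by
    rw [norm_smul]
    have : ‖(1 / (M:ℝ))‖ = 1 / (M:ℝ) := by
      rw [Real.norm_eq_abs, abs_of_nonneg]; positivity
    rw [this]
    exact mul_le_mul_of_nonneg_left (norm_sum_le _ _) (by positivity)
  have h2 : (∑ m, ‖v m‖) ^ 2 ≤ (M:ℝ) * ∑ m, ‖v m‖ ^ 2 := by
    have := sq_sum_le_card_mul_sum_sq (s := (Finset.univ : Finset (Fin M)))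
      (f := fun m => ‖v m‖)
    simpa using this
  have h0 : (0:ℝ) ≤ ‖(1 / (M:ℝ)) • ∑ m, v m‖ := norm_nonneg _
  have h3 : ‖(1 / (M:ℝ)) • ∑ m, v m‖ ^ 2 ≤ ((1 / (M:ℝ)) * ∑ m, ‖v m‖) ^ 2 :=
    pow_le_pow_left₀ h0 h1 2
  refine h3.trans ?_
  rcases Nat.eq_zero_or_pos M with hM | hM
  · subst hM; simp
  have hMpos : (0:ℝ) < M := by exact_mod_cast hM
  rw [mul_pow]
  calc (1 / (M:ℝ)) ^ 2 * (∑ m, ‖v m‖) ^ 2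
      ≤ (1 / (M:ℝ)) ^ 2 * ((M:ℝ) * ∑ m, ‖v m‖ ^ 2) :=
        mul_le_mul_of_nonneg_left h2 (by positivity)
    _ = 1 / (M:ℝ) * ∑ m, ‖v m‖ ^ 2 := by field_simp

set_option maxHeartbeats 2000000

/-- Lemma 1, small stepsize: If moreover `γ ≤ 1/(4L)`, then
`‖x̂_{t+1} − x⋆‖² ≤ ‖x̂_t − x⋆‖² + (3/2)γL V_t − γ(f(x̂_t) − f(x⋆))`. -/
theorem optimality_gap_recursion_small_step {d M : ℕ} (hM : 0 < M)
    (L γ : ℝ) (hL : 0 < L) (hγ0 : 0 ≤ γ) (hγ : γ ≤ 1 / (4 * L))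
    (f : Fin M → EuclideanSpace ℝ (Fin d) → ℝ)
    (g : Fin M → EuclideanSpace ℝ (Fin d) → EuclideanSpace ℝ (Fin d))
    (hsc : ∀ m x y, 0 ≤ f m x - f m y - ⟪g m y, x - y⟫ ∧
      f m x - f m y - ⟪g m y, x - y⟫ ≤ L / 2 * ‖x - y‖ ^ 2)
    (xstar : EuclideanSpace ℝ (Fin d))
    (hmin : ∀ y, avgR (fun m => f m xstar) ≤ avgR (fun m => f m y))
    (x : Fin M → EuclideanSpace ℝ (Fin d)) :
    ‖(avgV x - γ • avgV (fun m => g m (x m))) - xstar‖ ^ 2 ≤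
      ‖avgV x - xstar‖ ^ 2
      + (3 / 2) * γ * L * avgR (fun m => ‖x m - avgV x‖ ^ 2)
      - γ * (avgR (fun m => f m (avgV x)) - avgR (fun m => f m xstar)) := by
  set xh := avgV x with hxh
  set G := avgV (fun m => g m (x m)) with hG
  set Gh := avgV (fun m => g m xh) with hGh
  set V := avgR (fun m => ‖x m - xh‖ ^ 2) with hV
  set Δ := avgR (fun m => f m xh) - avgR (fun m => f m xstar) with hΔ
  -- basic nonnegativity
  have hVnn : 0 ≤ V := avgR_nonneg fun m => by positivity
  have hΔnn : 0 ≤ Δ := by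
    have := hmin xh; simp only [hΔ]; linarith
  have hγL : γ * L ≤ 1 / 4 := by
    have h4L : (0:ℝ) < 4 * L := by positivity
    rw [le_div_iff₀ h4L] at hγ
    linarith
  -- co-coercivity: Lipschitz gradients
  have lip : ∀ m z y, ‖g m z - g m y‖ ^ 2 ≤ 2 * L * (f m z - f m y - ⟪g m y, z - y⟫) := by
    intro m z y
    set w := z - L⁻¹ • (g m z - g m y) with hw
    have h1 := (hsc m w z).2
    have h2 := (hsc m w y).1
    have hwz : w - z = -(L⁻¹ • (g m z - g m y)) := by rw [hw]; abel
    have e1 : ⟪g m z, w - z⟫ = -(L⁻¹ * ⟪g m z, g m z - g m y⟫) := by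
      rw [hwz, inner_neg_right, real_inner_smul_right]
    have e2 : ‖w - z‖ ^ 2 = L⁻¹ ^ 2 * ‖g m z - g m y‖ ^ 2 := by
      rw [hwz, norm_neg, norm_smul, mul_pow, Real.norm_eq_abs, sq_abs]
    have e3 : ⟪g m y, w - y⟫ = ⟪g m y, z - y⟫ - L⁻¹ * ⟪g m y, g m z - g m y⟫ := by
      have : w - y = (z - y) - L⁻¹ • (g m z - g m y) := by rw [hw]; abel
      rw [this, inner_sub_right, real_inner_smul_right]
    have e4 : ⟪g m z, g m z - g m y⟫ - ⟪g m y, g m z - g m y⟫ = ‖g m z - g m y‖ ^ 2 := by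
      rw [← inner_sub_left, real_inner_self_eq_norm_sq]
    rw [e1, e2] at h1
    rw [e3] at h2
    have hL' : (0:ℝ) < L⁻¹ := by positivity
    have hrw : L / 2 * (L⁻¹ ^ 2 * ‖g m z - g m y‖ ^ 2) = L⁻¹ / 2 * ‖g m z - g m y‖ ^ 2 := by
      field_simp
    rw [hrw] at h1
    have e4' : L⁻¹ * ⟪g m z, g m z - g m y⟫ - L⁻¹ * ⟪g m y, g m z - g m y⟫
        = L⁻¹ * ‖g m z - g m y‖ ^ 2 := by rw [← mul_sub, e4]
    have key : L⁻¹ / 2 * ‖g m z - g m y‖ ^ 2 ≤ f m z - f m y - ⟪g m y, z - y⟫ := by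
      linarith
    have := mul_le_mul_of_nonneg_left key (by positivity : (0:ℝ) ≤ 2 * L)
    calc ‖g m z - g m y‖ ^ 2 = 2 * L * (L⁻¹ / 2 * ‖g m z - g m y‖ ^ 2) := by
          field_simp
      _ ≤ 2 * L * (f m z - f m y - ⟪g m y, z - y⟫) := this
  -- Step A: inner product lower bound
  have stepA : Δ - L / 2 * V ≤ ⟪G, xh - xstar⟫ := by
    have hin : ⟪G, xh - xstar⟫ = avgR (fun m => ⟪g m (x m), xh - xstar⟫) := by
      rw [hG, inner_avgV]
    have hper : ∀ m, f m xh - f m xstar - L / 2 * ‖x m - xh‖ ^ 2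
        ≤ ⟪g m (x m), xh - xstar⟫ := by
      intro m
      have h1 := (hsc m xh (x m)).2
      have h2 := (hsc m xstar (x m)).1
      have e1 : ⟪g m (x m), xh - x m⟫ = ⟪g m (x m), xh⟫ - ⟪g m (x m), x m⟫ :=
        inner_sub_right _ _ _
      have e2 : ⟪g m (x m), xstar - x m⟫ = ⟪g m (x m), xstar⟫ - ⟪g m (x m), x m⟫ :=
        inner_sub_right _ _ _
      have e3 : ⟪g m (x m), xh - xstar⟫ = ⟪g m (x m), xh⟫ - ⟪g m (x m), xstar⟫ :=
        inner_sub_right _ _ _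
      have e4 : ‖xh - x m‖ ^ 2 = ‖x m - xh‖ ^ 2 := by rw [norm_sub_rev]
      rw [e1, e4] at h1; rw [e2] at h2
      linarith [e3.ge, e3.le]
    calc Δ - L / 2 * V
        = avgR (fun m => f m xh - f m xstar - L / 2 * ‖x m - xh‖ ^ 2) := by
          rw [hΔ, hV]
          rw [show (fun m => f m xh - f m xstar - L / 2 * ‖x m - xh‖ ^ 2)
            = (fun m => (f m xh - f m xstar) - L / 2 * ‖x m - xh‖ ^ 2) from rfl]
          rw [avgR_sub (fun m => f m xh - f m xstar) (fun m => L / 2 * ‖x m - xh‖ ^ 2),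
            avgR_sub (fun m => f m xh) (fun m => f m xstar),
            avgR_smul (L / 2) (fun m => ‖x m - xh‖ ^ 2)]
      _ ≤ avgR (fun m => ⟪g m (x m), xh - xstar⟫) := avgR_le_avgR hper
      _ = ⟪G, xh - xstar⟫ := hin.symm
  -- Step B': norm of gradient at average point
  have hGhsq : ‖Gh‖ ^ 2 ≤ 2 * L * Δ := by
    set u := xh - L⁻¹ • Gh with hu
    have hux : u - xh = -(L⁻¹ • Gh) := by rw [hu]; abel
    have havg : avgR (fun m => f m u) - avgR (fun m => f m xh) - ⟪Gh, u - xh⟫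
        ≤ L / 2 * ‖u - xh‖ ^ 2 := by
      have hin : ⟪Gh, u - xh⟫ = avgR (fun m => ⟪g m xh, u - xh⟫) := by
        rw [hGh, inner_avgV]
      have : avgR (fun m => f m u) - avgR (fun m => f m xh) - ⟪Gh, u - xh⟫
          = avgR (fun m => f m u - f m xh - ⟪g m xh, u - xh⟫) := by
        rw [hin, ← avgR_sub (fun m => f m u) (fun m => f m xh),
          ← avgR_sub (fun m => f m u - f m xh) (fun m => ⟪g m xh, u - xh⟫)]
      rw [this]
      calc avgR (fun m => f m u - f m xh - ⟪g m xh, u - xh⟫)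
          ≤ avgR (fun _ : Fin M => L / 2 * ‖u - xh‖ ^ 2) :=
            avgR_le_avgR fun m => (hsc m u xh).2
        _ = L / 2 * ‖u - xh‖ ^ 2 := avgR_const hM _
    have e1 : ⟪Gh, u - xh⟫ = -(L⁻¹ * ‖Gh‖ ^ 2) := by
      rw [hux, inner_neg_right, real_inner_smul_right, real_inner_self_eq_norm_sq]
    have e2 : ‖u - xh‖ ^ 2 = L⁻¹ ^ 2 * ‖Gh‖ ^ 2 := by
      rw [hux, norm_neg, norm_smul, mul_pow, Real.norm_eq_abs, sq_abs]
    have hmu := hmin u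
    rw [e1, e2] at havg
    have hrw : L / 2 * (L⁻¹ ^ 2 * ‖Gh‖ ^ 2) = L⁻¹ / 2 * ‖Gh‖ ^ 2 := by
      field_simp
    rw [hrw] at havg
    have key : L⁻¹ / 2 * ‖Gh‖ ^ 2 ≤ Δ := by rw [hΔ]; linarith
    have := mul_le_mul_of_nonneg_left key (by positivity : (0:ℝ) ≤ 2 * L)
    calc ‖Gh‖ ^ 2 = 2 * L * (L⁻¹ / 2 * ‖Gh‖ ^ 2) := by field_simp
      _ ≤ 2 * L * Δ := this
  -- Step B: norm of G
  have stepB : ‖G‖ ^ 2 ≤ 2 * L ^ 2 * V + 4 * L * Δ := by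
    have hdiff : G - Gh = avgV (fun m => g m (x m) - g m xh) := avgV_sub _ _
    have hd2 : ‖G - Gh‖ ^ 2 ≤ L ^ 2 * V := by
      rw [hdiff]
      refine (norm_avgV_sq_le _).trans ?_
      rw [hV, ← avgR_smul (L ^ 2) (fun m => ‖x m - xh‖ ^ 2)]
      refine avgR_le_avgR fun m => ?_
      have h1 := lip m (x m) xh
      have h2 := (hsc m (x m) xh).2
      nlinarith
    have htri : ‖G‖ ≤ ‖G - Gh‖ + ‖Gh‖ := by
      calc ‖G‖ = ‖(G - Gh) + Gh‖ := by rw [sub_add_cancel]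
        _ ≤ ‖G - Gh‖ + ‖Gh‖ := norm_add_le _ _
    have hsq : ‖G‖ ^ 2 ≤ (‖G - Gh‖ + ‖Gh‖) ^ 2 :=
      pow_le_pow_left₀ (norm_nonneg G) htri 2
    nlinarith [hsq, sq_nonneg (‖G - Gh‖ - ‖Gh‖), hGhsq, hd2]
  -- expansion
  have hexp : ‖(xh - γ • G) - xstar‖ ^ 2
      = ‖xh - xstar‖ ^ 2 - 2 * γ * ⟪G, xh - xstar⟫ + γ ^ 2 * ‖G‖ ^ 2 := by
    have h : (xh - γ • G) - xstar = (xh - xstar) - γ • G := by abel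
    rw [h, norm_sub_sq_real, real_inner_smul_right, norm_smul, mul_pow,
      Real.norm_eq_abs, sq_abs, real_inner_comm]
    ring
  rw [hexp]
  have hγLnn : 0 ≤ γ * L := mul_nonneg hγ0 hL.le
  have key1 : 2 * γ * (Δ - L / 2 * V) ≤ 2 * γ * ⟪G, xh - xstar⟫ :=
    mul_le_mul_of_nonneg_left stepA (by positivity)
  have key2 : γ ^ 2 * ‖G‖ ^ 2 ≤ γ ^ 2 * (2 * L ^ 2 * V + 4 * L * Δ) :=
    mul_le_mul_of_nonneg_left stepB (sq_nonneg γ)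
  have h5 : γ * L * (γ * L * V) ≤ 1 / 4 * (γ * L * V) :=
    mul_le_mul_of_nonneg_right hγL (mul_nonneg hγLnn hVnn)
  have h6 : γ * L * (γ * Δ) ≤ 1 / 4 * (γ * Δ) :=
    mul_le_mul_of_nonneg_right hγL (mul_nonneg hγ0 hΔnn)
  have hVnn' := hVnn
  clear_value xh G Gh V Δ
  linarith only [key1, key2, h5, h6]
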